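/- arXiv:1511.06986 — 7 statements merged into one kernel-verified Lean document; each statement's English description precedes it below -/
import Mathlib

section
/- Let p be a prime and let a, b, c, d ∈ ℤ_p be the entries of a matrix in GL₂(ℤ_p) (i.e., ad − bc is a unit in ℤ_p). Then the set {(a·x + b·y)/(c·x + d·y) ∈ ℚ_p : x, y ∈ ℤ_p^×, c·x + d·y ≠ 0} is infinite. -/
/-!
With `y = 1` the values contain `(a t + b) / (c t + d)` for every unit `t` off the (at most one)
root of `c t + d`. A Möbius transformation with nonzero determinant is injective, and `ℤ_p` has
infinitely many units (e.g. `1 - p n`, `n ∈ ℕ`), so infinitely many values occur.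
-/

open Set

theorem IsLocalRing.setOf_isUnit_infinite {R : Type*} [CommRing R] [IsLocalRing R] [IsDomain R]
    [CharZero R] {π : R} (hπ : π ≠ 0) (hπ_nonunit : ¬IsUnit π) : {u : R | IsUnit u}.Infinite := by
  refine infinite_of_injective_forall_mem (f := fun n : ℕ => 1 - π * n) ?_ fun n => ?_
  · intro m n hmn
    exact Nat.cast_injective (mul_left_cancel₀ hπ (sub_right_injective hmn))
  · refine isUnit_one_sub_self_of_mem_nonunits _ ?_
    rw [← mem_maximalIdeal]
    exact Ideal.mul_mem_right _ _ ((mem_maximalIdeal π).mpr hπ_nonunit)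

theorem PadicInt.setOf_isUnit_infinite (p : ℕ) [Fact p.Prime] : {u : ℤ_[p] | IsUnit u}.Infinite :=
  IsLocalRing.setOf_isUnit_infinite (Nat.cast_ne_zero.mpr (Fact.out : p.Prime).ne_zero)
    PadicInt.p_nonunit

theorem setOf_mul_add_eq_zero_subsingleton {R : Type*} [CommRing R] [IsDomain R] {c d : R}
    (hcd : c ≠ 0 ∨ d ≠ 0) : {t : R | c * t + d = 0}.Subsingleton := by
  intro t ht s hs
  obtain rfl | hc := eq_or_ne c 0
  · exact absurd (by simpa using ht.out) (hcd.resolve_left (not_not.mpr rfl))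
  · exact mul_left_cancel₀ hc (by linear_combination ht.out - hs.out)

theorem mobius_injOn {K : Type*} [Field K] {a b c d : K} (hdet : a * d - b * c ≠ 0) :
    {t : K | c * t + d ≠ 0}.InjOn fun t => (a * t + b) / (c * t + d) := by
  intro t ht s hs hts
  rw [div_eq_div_iff ht hs] at hts
  exact mul_left_cancel₀ hdet (by linear_combination hts)

/-- Lemma B.4: for `(a b; c d) ∈ GL₂(ℤ_p)`, the set of values `(ax+by)/(cx+dy)` in `ℚ_p`,
as `x, y` range over units of `ℤ_p`, is infinite. -/
theorem stmt_2 (p : ℕ) [Fact p.Prime] (a b c d : ℤ_[p]) (h : IsUnit (a * d - b * c)) :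
    {z : ℚ_[p] | ∃ x y : ℤ_[p], IsUnit x ∧ IsUnit y ∧ c * x + d * y ≠ 0 ∧
      z = (↑(a * x + b * y) : ℚ_[p]) / (↑(c * x + d * y) : ℚ_[p])}.Infinite := by
  have hdet : a * d - b * c ≠ 0 := h.ne_zero
  have hcd : c ≠ 0 ∨ d ≠ 0 := by
    by_contra! hcd
    exact hdet (by rw [hcd.1, hcd.2]; ring)
  set S : Set ℤ_[p] := {t | IsUnit t} \ {t | c * t + d = 0}
  have hS : S.Infinite :=
    (PadicInt.setOf_isUnit_infinite p).sdiff (setOf_mul_add_eq_zero_subsingleton hcd).finite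
  have hS_coe : MapsTo (fun t : ℤ_[p] => (t : ℚ_[p])) S {u | (c : ℚ_[p]) * u + d ≠ 0} :=
    fun t ht h0 => ht.2 (PadicInt.coe_eq_zero.mp h0)
  have hdet_coe : (a : ℚ_[p]) * d - b * c ≠ 0 := fun h0 => hdet (PadicInt.coe_eq_zero.mp h0)
  have hinj := (mobius_injOn hdet_coe).comp Subtype.val_injective.injOn hS_coe
  refine infinite_of_injOn_mapsTo hinj (fun (t : ℤ_[p]) ht => ⟨t, 1, ht.1, isUnit_one, ?_, ?_⟩) hS
  · simpa using (ht.2 : c * t + d ≠ 0)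
  · simp only [mul_one]
    rfl
end

section
/- Let p be a prime, let W be a free ℤ_p-module of finite rank d ≥ 1, let 𝔇 be a finite collection of free rank-(d−1) direct summands of W, and let W₀ be their union. Let W₁, W₂ ∈ 𝔇 and suppose v₁, v₂ ∈ W ∖ W₀ satisfy W₁ + ℤ_p·v₁ = W = W₂ + ℤ_p·v₂ (with W₁ ∩ ℤ_p·v₁ = 0 and W₂ ∩ ℤ_p·v₂ = 0). Then there exist α, β ∈ ℤ_p such that the element v = α·v₁ + β·v₂ satisfies: (a) v ∈ W ∖ W₀, and (b) W₁ + ℤ_p·v = W = W₂ + ℤ_p·v. -/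
/-!
Every `W' ∈ 𝔇` is the kernel of a surjective functional `f_{W'} : W → ℤ_p`, and then
`W' + ℤ_p·v = W` exactly when `f_{W'}(v)` is a unit, while `v ∉ W'` means `f_{W'}(v) ≠ 0`.
So everything happens in `ℤ_p`: first choose `(α₀, β₀) ∈ {(1,0), (0,1), (1,1)}` making
`α₀ f_{W₁}(v₁) + β₀ f_{W₁}(v₂)` and `α₀ f_{W₂}(v₁) + β₀ f_{W₂}(v₂)` units, then replace `β₀` by
`β₀ + p t`. This keeps both values units, and since every `f_{W'}(v₂)` is nonzero, each `W' ∈ 𝔇`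
forbids at most one `t ∈ ℤ_p`.
-/

open Module Submodule IsLocalRing

theorem exists_forall_add_mul_ne_zero {R ι : Type*} [CommRing R] [IsDomain R] [Infinite R]
    (s : Finset ι) (c e : ι → R) (he : ∀ i ∈ s, e i ≠ 0) :
    ∃ t : R, ∀ i ∈ s, c i + t * e i ≠ 0 := by
  have hroot : ∀ i ∈ s, {t : R | c i + t * e i = 0}.Subsingleton :=
    fun i hi t (ht : c i + t * e i = 0) t' (ht' : c i + t' * e i = 0) =>
      mul_right_cancel₀ (he i hi) (by linear_combination ht - ht')
  obtain ⟨t, ht⟩ := (s.finite_toSet.biUnion fun i hi => (hroot i hi).finite).exists_notMem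
  simp only [Set.mem_iUnion, Set.mem_ofPred_eq, not_exists] at ht
  exact ⟨t, fun i hi => ht i hi⟩

theorem IsLocalRing.isUnit_add_of_mem_maximalIdeal {R : Type*} [CommRing R] [IsLocalRing R]
    {a b : R} (ha : IsUnit a) (hb : b ∈ maximalIdeal R) : IsUnit (a + b) :=
  notMem_maximalIdeal.1 fun hab => notMem_maximalIdeal.2 ha (by simpa using sub_mem hab hb)

theorem IsLocalRing.exists_isUnit_mul_add_mul {R : Type*} [CommRing R] [IsLocalRing R]
    {a₁ b₁ a₂ b₂ : R} (ha₁ : IsUnit a₁) (hb₂ : IsUnit b₂) :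
    ∃ α β : R, IsUnit (α * a₁ + β * b₁) ∧ IsUnit (α * a₂ + β * b₂) := by
  by_cases ha₂ : IsUnit a₂
  · exact ⟨1, 0, by simpa using ha₁, by simpa using ha₂⟩
  by_cases hb₁ : IsUnit b₁
  · exact ⟨0, 1, by simpa using hb₁, by simpa using hb₂⟩
  refine ⟨1, 1, ?_, ?_⟩
  · simpa using isUnit_add_of_mem_maximalIdeal ha₁ ((mem_maximalIdeal _).2 hb₁)
  · simpa [add_comm] using isUnit_add_of_mem_maximalIdeal hb₂ ((mem_maximalIdeal _).2 ha₂)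

theorem IsLocalRing.exists_isUnit_mul_add_mul_and_forall_ne_zero {R ι : Type*} [CommRing R]
    [IsDomain R] [IsLocalRing R] [Infinite R] {m : R} (hm : m ∈ maximalIdeal R) (hm₀ : m ≠ 0)
    (s : Finset ι) (a b : ι → R) (hb : ∀ i ∈ s, b i ≠ 0) {i₁ i₂ : ι}
    (ha₁ : IsUnit (a i₁)) (hb₂ : IsUnit (b i₂)) :
    ∃ α β : R, (∀ i ∈ s, α * a i + β * b i ≠ 0) ∧
      IsUnit (α * a i₁ + β * b i₁) ∧ IsUnit (α * a i₂ + β * b i₂) := by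
  obtain ⟨α, β, hu₁, hu₂⟩ := exists_isUnit_mul_add_mul (b₁ := b i₁) (a₂ := a i₂) ha₁ hb₂
  obtain ⟨t, ht⟩ := exists_forall_add_mul_ne_zero s (fun i => α * a i + β * b i)
    (fun i => m * b i) fun i hi => mul_ne_zero hm₀ (hb i hi)
  have hperturb : ∀ i, α * a i + (β + m * t) * b i = α * a i + β * b i + t * (m * b i) :=
    fun i => by ring
  have hunit : ∀ i, IsUnit (α * a i + β * b i) → IsUnit (α * a i + (β + m * t) * b i) :=
    fun i hu => hperturb i ▸
      isUnit_add_of_mem_maximalIdeal hu (Ideal.mul_mem_left _ _ (Ideal.mul_mem_right _ _ hm))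
  exact ⟨α, β + m * t, fun i hi => hperturb i ▸ ht i hi, hunit i₁ hu₁, hunit i₂ hu₂⟩

theorem Submodule.exists_ker_eq_of_isCompl_of_finrank_add_one {R M : Type*} [CommRing R]
    [IsDomain R] [IsPrincipalIdealRing R] [AddCommGroup M] [Module R M] [Module.Free R M]
    [Module.Finite R M] {N N' : Submodule R M} (hNN' : IsCompl N N')
    (hN : finrank R N + 1 = finrank R M) :
    ∃ f : M →ₗ[R] R, LinearMap.ker f = N ∧ Function.Surjective f := by
  have hN' : finrank R N' = 1 := by
    have := (prodEquivOfIsCompl N N' hNN').finrank_eq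
    rw [finrank_prod] at this
    omega
  let e : N' ≃ₗ[R] R :=
    (finBasisOfFinrankEq R N' hN').equivFun.trans (LinearEquiv.funUnique (Fin 1) R R)
  refine ⟨e.toLinearMap ∘ₗ N'.projectionOnto N hNN'.symm, ?_, ?_⟩
  · rw [LinearEquiv.ker_comp, ker_projectionOnto]
  · exact e.surjective.comp (projectionOnto_surjective _)

theorem LinearMap.ker_sup_span_singleton_eq_top_iff {R M : Type*} [CommRing R]
    [AddCommGroup M] [Module R M] {f : M →ₗ[R] R} (hf : Function.Surjective f) (v : M) :
    LinearMap.ker f ⊔ span R {v} = ⊤ ↔ IsUnit (f v) := by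
  have hmap : (LinearMap.ker f ⊔ span R {v}).map f = span R {f v} := by
    rw [Submodule.map_sup, map_span, Set.image_singleton, LinearMap.le_ker_iff_map.1 le_rfl,
      bot_sup_eq]
  rw [← Ideal.span_singleton_eq_top, Ideal.span, ← hmap]
  constructor
  · intro h
    rw [h, Submodule.map_top, LinearMap.range_eq_top.2 hf]
  · intro h
    rw [← comap_map_eq_self (le_sup_left : LinearMap.ker f ≤ _), h, Submodule.comap_top]

theorem stmt_3_general (p : ℕ) [Fact p.Prime] (d : ℕ) (hd : 1 ≤ d)
    (W : Type*) [AddCommGroup W] [Module ℤ_[p] W]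
    [Module.Free ℤ_[p] W] [Module.Finite ℤ_[p] W]
    (hW : Module.finrank ℤ_[p] W = d)
    (D : Finset (Submodule ℤ_[p] W))
    (hD : ∀ W' ∈ D, (∃ W'' : Submodule ℤ_[p] W, IsCompl W' W'') ∧
      Module.Free ℤ_[p] W' ∧ Module.finrank ℤ_[p] W' = d - 1)
    (W₁ W₂ : Submodule ℤ_[p] W) (hW₁ : W₁ ∈ D) (hW₂ : W₂ ∈ D)
    (v₁ v₂ : W)
    (hv₂ : ∀ W' ∈ D, v₂ ∉ W')
    (h₁ : W₁ ⊔ Submodule.span ℤ_[p] {v₁} = ⊤)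
    (h₂ : W₂ ⊔ Submodule.span ℤ_[p] {v₂} = ⊤) :
    ∃ α β : ℤ_[p],
      (∀ W' ∈ D, α • v₁ + β • v₂ ∉ W') ∧
      W₁ ⊔ Submodule.span ℤ_[p] {α • v₁ + β • v₂} = ⊤ ∧
      W₂ ⊔ Submodule.span ℤ_[p] {α • v₁ + β • v₂} = ⊤ := by
  have hfun : ∀ W' ∈ D, ∃ f : W →ₗ[ℤ_[p]] ℤ_[p], LinearMap.ker f = W' ∧ Function.Surjective f := by
    rintro W' hW'
    obtain ⟨⟨W'', hc⟩, -, hrank⟩ := hD W' hW'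
    exact exists_ker_eq_of_isCompl_of_finrank_add_one hc (by omega)
  choose! f hker hsurj using hfun
  have hunit : ∀ W' ∈ D, ∀ v, W' ⊔ span ℤ_[p] {v} = ⊤ ↔ IsUnit (f W' v) := fun W' hW' v => by
    simpa only [hker W' hW'] using LinearMap.ker_sup_span_singleton_eq_top_iff (hsurj W' hW') v
  have hp : (p : ℤ_[p]) ∈ maximalIdeal ℤ_[p] :=
    PadicInt.maximalIdeal_eq_span_p (p := p) ▸ Ideal.mem_span_singleton_self _
  obtain ⟨α, β, hne, hu₁, hu₂⟩ := exists_isUnit_mul_add_mul_and_forall_ne_zero hp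
    (Nat.cast_ne_zero.2 (Fact.out : p.Prime).ne_zero) D (fun W' => f W' v₁) (fun W' => f W' v₂)
    (fun W' hW' h => hv₂ W' hW' (hker W' hW' ▸ h)) ((hunit W₁ hW₁ v₁).1 h₁) ((hunit W₂ hW₂ v₂).1 h₂)
  have hval : ∀ W', f W' (α • v₁ + β • v₂) = α * f W' v₁ + β * f W' v₂ := by simp
  refine ⟨α, β, fun W' hW' hmem => hne W' hW' ?_, ?_, ?_⟩
  · rw [← hval, ← LinearMap.mem_ker, hker W' hW']
    exact hmem
  · rwa [hunit W₁ hW₁, hval]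
  · rwa [hunit W₂ hW₂, hval]

/-- Lemma B.6: given two members `W₁, W₂` of a finite collection `D` of free rank-`(d-1)`
direct summands, and `v₁, v₂ ∉ ⋃ D` with `W₁ ⊕ ℤ_p·v₁ = W = W₂ ⊕ ℤ_p·v₂`, there are
`α, β ∈ ℤ_p` such that `v = α·v₁ + β·v₂` avoids `⋃ D` and `W₁ + ℤ_p·v = W = W₂ + ℤ_p·v`. -/
theorem stmt_3 (p : ℕ) [Fact p.Prime] (d : ℕ) (hd : 1 ≤ d)
    (W : Type*) [AddCommGroup W] [Module ℤ_[p] W]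
    [Module.Free ℤ_[p] W] [Module.Finite ℤ_[p] W]
    (hW : Module.finrank ℤ_[p] W = d)
    (D : Finset (Submodule ℤ_[p] W))
    (hD : ∀ W' ∈ D, (∃ W'' : Submodule ℤ_[p] W, IsCompl W' W'') ∧
      Module.Free ℤ_[p] W' ∧ Module.finrank ℤ_[p] W' = d - 1)
    (W₁ W₂ : Submodule ℤ_[p] W) (hW₁ : W₁ ∈ D) (hW₂ : W₂ ∈ D)
    (v₁ v₂ : W)
    (hv₁ : ∀ W' ∈ D, v₁ ∉ W') (hv₂ : ∀ W' ∈ D, v₂ ∉ W')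
    (h₁ : W₁ ⊔ Submodule.span ℤ_[p] {v₁} = ⊤)
    (h₁' : W₁ ⊓ Submodule.span ℤ_[p] {v₁} = ⊥)
    (h₂ : W₂ ⊔ Submodule.span ℤ_[p] {v₂} = ⊤)
    (h₂' : W₂ ⊓ Submodule.span ℤ_[p] {v₂} = ⊥) :
    ∃ α β : ℤ_[p],
      (∀ W' ∈ D, α • v₁ + β • v₂ ∉ W') ∧
      W₁ ⊔ Submodule.span ℤ_[p] {α • v₁ + β • v₂} = ⊤ ∧
      W₂ ⊔ Submodule.span ℤ_[p] {α • v₁ + β • v₂} = ⊤ :=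
  stmt_3_general p d hd W hW D hD W₁ W₂ hW₁ hW₂ v₁ v₂ hv₂ h₁ h₂
end

section
/- Let p be a prime, let W be a free ℤ_p-module of finite rank d ≥ 1, let 𝔇 be a finite collection of free rank-(d−1) direct summands of W, let W₀ be their union, and let W' ∈ 𝔇. Then there exists v ∈ W ∖ W₀ such that W' + ℤ_p·v = W. -/
/-!
Every member `P` of `D` is the kernel of a surjective linear form `f_P : W → ℤ_p`, since its
complement is free of rank one. Fix `w` with `f_{W'} w = 1`; every `v ∈ w + W'` satisfies
`W' + ℤ_p v = W` and `v ∉ W'`. For `P ≠ W'` the form `f_P` does not vanish on `W'` (otherwise it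
would be a nonzero multiple of `f_{W'}`, forcing `P = W'`), so `v ∈ P` cuts an affine hyperplane
out of the coset `w + W'`. As `ℤ_p` is infinite, finitely many such hyperplanes miss some point
of the coset.
-/

open Module Submodule LinearMap

theorem finite_setOf_add_mul_eq {R : Type*} [CommRing R] [IsDomain R] {a b c : R}
    (h : b ≠ 0 ∨ a ≠ c) : {t : R | a + t * b = c}.Finite := by
  by_cases hb : b = 0
  · have hac := h.resolve_left (not_not.2 hb)
    simp [hb, hac]
  · refine Set.Subsingleton.finite fun t₁ h₁ t₂ h₂ => ?_
    exact mul_right_cancel₀ hb (add_left_cancel (h₁.trans h₂.symm))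

section Avoidance

variable {R M : Type*} [CommRing R] [IsDomain R] [Infinite R] [AddCommGroup M] [Module R M]

theorem LinearMap.exists_forall_apply_ne {ι : Type*} (s : Finset ι) (φ : ι → M →ₗ[R] R)
    (c : ι → R) (hφ : ∀ i ∈ s, φ i ≠ 0) : ∃ m, ∀ i ∈ s, φ i m ≠ c i := by
  classical
  induction s using Finset.induction_on with
  | empty => exact ⟨0, by simp⟩
  | @insert i s hi ih =>
    obtain ⟨m, hm⟩ := ih fun j hj => hφ j (Finset.mem_insert_of_mem hj)
    obtain ⟨z, hz⟩ := DFunLike.ne_iff.1 (hφ i (Finset.mem_insert_self i s))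
    -- Along the line `m + t • z` each hyperplane is hit for at most one `t`.
    have hline : ∀ j ∈ insert i s, {t : R | φ j m + t * φ j z = c j}.Finite := by
      intro j hj
      refine finite_setOf_add_mul_eq ?_
      rcases Finset.mem_insert.1 hj with rfl | hj
      · exact Or.inl hz
      · exact Or.inr (hm j hj)
    obtain ⟨t, ht⟩ := (Set.Finite.biUnion (insert i s).finite_toSet hline).infinite_compl.nonempty
    refine ⟨m + t • z, fun j hj hmem => ht (Set.mem_biUnion hj ?_)⟩
    simpa using hmem

end Avoidance

section Functionals

variable {R M : Type*} [CommRing R] [AddCommGroup M] [Module R M]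

theorem LinearMap.ker_sup_span_singleton_eq_top {f : M →ₗ[R] R} {v : M} (hv : f v = 1) :
    ker f ⊔ span R {v} = ⊤ := by
  refine eq_top_iff.2 fun x _ => ?_
  rw [← sub_add_cancel x (f x • v)]
  exact add_mem_sup (by simp [hv]) (smul_mem _ _ (mem_span_singleton_self v))

theorem LinearMap.ker_eq_of_ker_le [IsDomain R] {f g : M →ₗ[R] R} {v : M} (hv : f v = 1)
    (hg : g ≠ 0) (h : ker f ≤ ker g) : ker g = ker f := by
  have hgf : ∀ x, g x = f x * g v := fun x => by
    have : g (x - f x • v) = 0 := h (by simp [hv])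
    rwa [map_sub, map_smul, smul_eq_mul, sub_eq_zero] at this
  have hgv : g v ≠ 0 := fun h0 => hg (LinearMap.ext fun x => by simp [hgf x, h0])
  ext x
  simp [hgf x, hgv]

theorem exists_surjective_ker_eq_of_isCompl [IsDomain R] [IsPrincipalIdealRing R]
    [Module.Free R M] [Module.Finite R M] {P Q : Submodule R M} (hPQ : IsCompl P Q)
    (hP : finrank R P + 1 = finrank R M) :
    ∃ f : M →ₗ[R] R, Function.Surjective f ∧ ker f = P := by
  have : Module.Free R (M ⧸ P) := Module.Free.of_equiv (quotientEquivOfIsCompl P Q hPQ).symm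
  have hrank : finrank R (M ⧸ P) = 1 := by
    have := P.finrank_quotient_add_finrank
    omega
  obtain ⟨e⟩ := nonempty_linearEquiv_of_finrank_eq_one hrank
  refine ⟨e.symm.toLinearMap ∘ₗ P.mkQ, e.symm.surjective.comp P.mkQ_surjective, ?_⟩
  rw [LinearEquiv.ker_comp, ker_mkQ]

end Functionals

/-- Claim (eqn. vS) in the proof of Lemma B.5: for any member `W'` of a finite collection `D`
of free rank-`(d-1)` direct summands of the free rank-`d` module `W`, there exists
`v ∈ W ∖ ⋃ D` with `W' + ℤ_p·v = W`. -/
theorem stmt_4 (p : ℕ) [Fact p.Prime] (d : ℕ) (hd : 1 ≤ d)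
    (W : Type*) [AddCommGroup W] [Module ℤ_[p] W]
    [Module.Free ℤ_[p] W] [Module.Finite ℤ_[p] W]
    (hW : Module.finrank ℤ_[p] W = d)
    (D : Finset (Submodule ℤ_[p] W))
    (hD : ∀ P ∈ D, (∃ Q : Submodule ℤ_[p] W, IsCompl P Q) ∧
      Module.Free ℤ_[p] P ∧ Module.finrank ℤ_[p] P = d - 1)
    (W' : Submodule ℤ_[p] W) (hW' : W' ∈ D) :
    ∃ v : W, (∀ P ∈ D, v ∉ P) ∧ W' ⊔ Submodule.span ℤ_[p] {v} = ⊤ := by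
  have hker : ∀ P ∈ D, ∃ f : W →ₗ[ℤ_[p]] ℤ_[p], Function.Surjective f ∧ ker f = P := by
    intro P hP
    obtain ⟨⟨Q, hPQ⟩, -, hrank⟩ := hD P hP
    exact exists_surjective_ker_eq_of_isCompl hPQ (by omega)
  choose! f hf_surj hf_ker using hker
  obtain ⟨w, hw⟩ := hf_surj W' hW' 1
  have hφ : ∀ P ∈ D.erase W', f P ∘ₗ W'.subtype ≠ 0 := by
    intro P hP h0
    obtain ⟨hne, hP⟩ := Finset.mem_erase.1 hP
    have hf0 : f P ≠ 0 := fun h => by simpa [h] using hf_surj P hP 1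
    have hle : ker (f W') ≤ ker (f P) := by
      simpa [hf_ker W' hW', hf_ker P hP] using range_le_ker_iff.2 h0
    exact hne (by rw [← hf_ker P hP, ← hf_ker W' hW', ker_eq_of_ker_le hw hf0 hle])
  -- The solutions of `f W' v = 1` form the coset `w + W'`; search `v` there.
  obtain ⟨u, hu⟩ := exists_forall_apply_ne (D.erase W') _ (fun P => -f P w) hφ
  have hv : f W' (w + u) = 1 := by
    have hu' : f W' u = 0 := by
      rw [← LinearMap.mem_ker, hf_ker W' hW']
      exact u.2
    rw [map_add, hw, hu', add_zero]
  refine ⟨w + u, fun P hP hmem => ?_, by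
    simpa [hf_ker W' hW'] using ker_sup_span_singleton_eq_top hv⟩
  rw [← hf_ker P hP, LinearMap.mem_ker] at hmem
  by_cases hPW' : P = W'
  · subst hPW'
    exact one_ne_zero (hv.symm.trans hmem)
  · refine hu P (Finset.mem_erase.2 ⟨hPW', hP⟩) ?_
    simpa [eq_neg_iff_add_eq_zero, add_comm] using hmem
end

section
/- Let p be a prime, V a free ℤ_p-module of finite rank g, and U ⊆ V a direct summand which is free of rank g − s, where 0 ≤ s ≤ g. Then there exists a ℤ_p-basis v₁,…,v_g of V such that for every subset I ⊆ {1,…,g} with |I| = s, the ℤ_p-span of {v_i : i ∈ I} intersects U trivially: span_{ℤ_p}(v_i : i ∈ I) ∩ U = 0. -/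
/-!
Split `V = U ⊕ U'` and let `π : V → U' ≅ R^s` be the projection along `U`; a family whose image
under `π` is linearly independent spans a submodule meeting `U = ker π` trivially. If `b` is a
basis of `U`, `b'` one of `U'` and `A` is a `(g - s) × s` matrix, the basis
`b i + ∑ k, A i k • b' k`, `b' k` of `V` is sent by `π` to the rows of `[A; 1]`, so it suffices
that every `s × s` minor of `[A; 1]` is nonzero. As a polynomial in the entries of `A`, each such
minor is nonzero, since a suitable 0/1 specialisation turns it into a permutation matrix; over the
infinite domain `ℤ_p` the product of these finitely many polynomials has a non-root.
-/

open Matrix MvPolynomial Module Set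

theorem MvPolynomial.exists_forall_eval_ne_zero {R σ ι : Type*} [CommRing R] [IsDomain R]
    [Infinite R] [Finite ι] {P : ι → MvPolynomial σ R} (hP : ∀ i, P i ≠ 0) :
    ∃ x : σ → R, ∀ i, eval x (P i) ≠ 0 := by
  cases nonempty_fintype ι
  have hprod : ∏ i, P i ≠ 0 := Finset.prod_ne_zero_iff.mpr fun i _ => hP i
  obtain ⟨x, hx⟩ : ∃ x, eval x (∏ i, P i) ≠ 0 := by
    by_contra! h
    exact hprod (MvPolynomial.funext fun x => by rw [h x, map_zero])
  rw [map_prod, Finset.prod_ne_zero_iff] at hx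
  exact ⟨x, fun i => hx i (Finset.mem_univ i)⟩

theorem Function.Embedding.exists_perm_apply_eq_of_apply_eq_inr {m n : Type*} [Finite n]
    (c : n ↪ m ⊕ n) : ∃ σ : Equiv.Perm n, ∀ i j, c i = .inr j → σ i = j := by
  classical
  cases nonempty_fintype n
  let f : n → n := fun i => (c i).elim (fun _ => i) id
  have hinj : InjOn f {i | (c i).isRight} := by
    intro i hi i' hi' h
    obtain ⟨k, hk⟩ := Sum.isRight_iff.mp hi
    obtain ⟨k', hk'⟩ := Sum.isRight_iff.mp hi'
    simp only [f, hk, hk', Sum.elim_inr, id] at h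
    exact c.injective (hk.trans (h ▸ hk'.symm))
  obtain ⟨g, hg⟩ := Set.MapsTo.exists_equiv_extend_of_card_eq (t := Finset.univ)
    Finset.card_univ.symm (fun _ _ => by simp) hinj
  refine ⟨g.trans (Equiv.subtypeUnivEquiv Finset.mem_univ), fun i j hij => ?_⟩
  simpa [f, hij] using hg i (by simp [hij])

namespace Matrix

variable {R m n : Type*} [CommRing R] [DecidableEq n] [Fintype n]

theorem exists_det_submatrix_fromRows_one_ne_zero [Nontrivial R] (c : n ↪ m ⊕ n) :
    ∃ A : Matrix m n R, ((fromRows A 1).submatrix c id).det ≠ 0 := by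
  obtain ⟨σ, hσ⟩ := c.exists_perm_apply_eq_of_apply_eq_inr
  -- Row `c j` of `fromRows A 1` is the unit vector at `σ j`, for rows of `1` by the choice of `σ`.
  let A : Matrix m n R := fun i => Function.extend c (fun j => (1 : Matrix n n R) (σ j)) 0 (.inl i)
  refine ⟨A, ?_⟩
  have hperm : (fromRows A 1).submatrix c id = (1 : Matrix n n R).submatrix σ id := by
    ext i j
    rw [submatrix_apply, submatrix_apply]
    rcases hc : c i with k | k
    · change Function.extend c (fun j => (1 : Matrix n n R) (σ j)) 0 (.inl k) j = _
      rw [← hc, c.injective.extend_apply]; rfl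
    · rw [fromRows_apply_inr, hσ i k hc]
  rw [hperm, ← PEquiv.toMatrix_toPEquiv_eq, det_permutation]
  rcases Int.units_eq_one_or (Equiv.Perm.sign σ) with h | h <;> simp [h]

theorem exists_forall_det_submatrix_fromRows_one_ne_zero [IsDomain R] [Infinite R] [Fintype m]
    [DecidableEq m] :
    ∃ A : Matrix m n R, ∀ c : n ↪ m ⊕ n, ((fromRows A 1).submatrix c id).det ≠ 0 := by
  let G : Matrix m n (MvPolynomial (m × n) R) := of fun i j => X (i, j)
  have heval (x : m × n → R) (c : n ↪ m ⊕ n) :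
      eval x ((fromRows G 1).submatrix c id).det =
        ((fromRows (of fun i j => x (i, j)) 1).submatrix c id).det := by
    rw [RingHom.map_det, RingHom.mapMatrix_apply, ← submatrix_map, fromRows_map,
      Matrix.map_one _ (map_zero _) (map_one _)]
    congr
    ext i j
    simp [G]
  obtain ⟨x, hx⟩ := exists_forall_eval_ne_zero
    (P := fun c : n ↪ m ⊕ n => ((fromRows G 1).submatrix c id).det) fun c h => by
      obtain ⟨A, hA⟩ := exists_det_submatrix_fromRows_one_ne_zero (R := R) c
      have hA' := heval (fun ij => A ij.1 ij.2) c
      rw [h, map_zero] at hA'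
      exact hA hA'.symm
  exact ⟨of fun i j => x (i, j), fun c => heval x c ▸ hx c⟩

end Matrix

namespace Submodule

variable {R V m n : Type*} [CommRing R] [AddCommGroup V] [Module R V] {U U' : Submodule R V}

theorem finrank_add_finrank_of_isCompl [StrongRankCondition R] [Free R U] [Module.Finite R U]
    [Free R U'] [Module.Finite R U'] (hc : IsCompl U U') :
    finrank R U + finrank R U' = finrank R V := by
  rw [← finrank_prod, (prodEquivOfIsCompl U U' hc).finrank_eq]

theorem exists_basis_projectionOnto_eq (hc : IsCompl U U') (b : Basis m R U)
    (b' : Basis n R U') (w : m → U') :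
    ∃ v : Basis (m ⊕ n) R V, ∀ z, U'.projectionOnto U hc.symm (v z) = Sum.elim w b' z := by
  let shear := (LinearEquiv.refl R U).skewProd (LinearEquiv.refl R U') (b.constr R w)
  refine ⟨((b.prod b').map shear).map (prodEquivOfIsCompl U U' hc), fun z => ?_⟩
  rw [Basis.map_apply, Basis.map_apply, coe_prodEquivOfIsCompl', map_add,
    projectionOnto_apply_of_mem_right _ (coe_mem _), projectionOnto_apply_left, zero_add,
    LinearEquiv.skewProd_apply]
  rcases z with i | k <;> simp [b.constr_basis]

theorem exists_basis_span_inf_eq_bot [IsDomain R] [Fintype n] [DecidableEq n]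
    (hc : IsCompl U U') (b : Basis m R U) (b' : Basis n R U') (A : Matrix m n R) :
    ∃ v : Basis (m ⊕ n) R V, ∀ c : n ↪ m ⊕ n, ((fromRows A 1).submatrix c id).det ≠ 0 →
      span R (range (v ∘ c)) ⊓ U = ⊥ := by
  obtain ⟨v, hv⟩ := exists_basis_projectionOnto_eq hc b b' fun i => b'.equivFun.symm (A i)
  let Φ : V →ₗ[R] n → R := b'.equivFun.toLinearMap ∘ₗ U'.projectionOnto U hc.symm
  have hΦ : ∀ z, Φ (v z) = fromRows A 1 z := by
    rintro (i | k)
    · simp only [Φ, LinearMap.comp_apply, LinearEquiv.coe_coe, hv, Sum.elim_inl,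
        LinearEquiv.apply_symm_apply]
      rfl
    · ext j
      simp [Φ, hv, one_apply]
  have hker : LinearMap.ker Φ = U := by
    rw [LinearEquiv.ker_comp, ker_projectionOnto]
  refine ⟨v, fun c hdet => ?_⟩
  rw [← hker, ← disjoint_iff]
  apply range_ker_disjoint
  convert linearIndependent_rows_of_det_ne_zero hdet using 1
  funext i
  exact hΦ (c i)

end Submodule

theorem stmt_6_general (p : ℕ) [Fact p.Prime] (g s : ℕ) (hs : s ≤ g)
    (V : Type*) [AddCommGroup V] [Module ℤ_[p] V]
    [Module.Free ℤ_[p] V] [Module.Finite ℤ_[p] V]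
    (hV : Module.finrank ℤ_[p] V = g)
    (U : Submodule ℤ_[p] V) (hUc : ∃ U' : Submodule ℤ_[p] V, IsCompl U U')
    (hU : Module.finrank ℤ_[p] U = g - s) :
    ∃ v : Module.Basis (Fin g) ℤ_[p] V,
      ∀ I : Finset (Fin g), I.card = s →
        Submodule.span ℤ_[p] (⇑v '' (I : Set (Fin g))) ⊓ U = ⊥ := by
  obtain ⟨U', hc⟩ := hUc
  have hU' : finrank ℤ_[p] U' = s := by
    have := Submodule.finrank_add_finrank_of_isCompl hc
    omega
  obtain ⟨A, hA⟩ := exists_forall_det_submatrix_fromRows_one_ne_zero (R := ℤ_[p])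
    (m := Fin (g - s)) (n := Fin s)
  obtain ⟨v, hv⟩ := Submodule.exists_basis_span_inf_eq_bot hc
    (finBasisOfFinrankEq _ _ hU) (finBasisOfFinrankEq _ _ hU') A
  let e : Fin (g - s) ⊕ Fin s ≃ Fin g := finSumFinEquiv.trans (finCongr (Nat.sub_add_cancel hs))
  refine ⟨v.reindex e, fun I hI => ?_⟩
  let c : Fin s ↪ Fin (g - s) ⊕ Fin s := (I.orderEmbOfFin hI).toEmbedding.trans e.symm.toEmbedding
  have hrange : ⇑(v.reindex e) '' I = range (v ∘ c) := by
    rw [← I.range_orderEmbOfFin hI, ← range_comp, Basis.coe_reindex]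
    rfl
  rw [hrange]
  exact hv c (hA c)

/-- Proposition B.1 (admissible basis, module-theoretic content): if `U` is a free rank-`(g-s)`
direct summand of a free rank-`g` ℤ_p-module `V`, there is a basis `v₁, …, v_g` of `V`
such that the span of any `s` of the `v_i` meets `U` trivially. -/
theorem stmt_6 (p : ℕ) [Fact p.Prime] (g s : ℕ) (hs : s ≤ g)
    (V : Type*) [AddCommGroup V] [Module ℤ_[p] V]
    [Module.Free ℤ_[p] V] [Module.Finite ℤ_[p] V]
    (hV : Module.finrank ℤ_[p] V = g)
    (U : Submodule ℤ_[p] V) (hUc : ∃ U' : Submodule ℤ_[p] V, IsCompl U U')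
    (hUfree : Module.Free ℤ_[p] U) (hU : Module.finrank ℤ_[p] U = g - s) :
    ∃ v : Module.Basis (Fin g) ℤ_[p] V,
      ∀ I : Finset (Fin g), I.card = s →
        Submodule.span ℤ_[p] (⇑v '' (I : Set (Fin g))) ⊓ U = ⊥ :=
  stmt_6_general p g s hs V hV U hUc hU
end

section
/- Let p be a prime, s ≥ 1 an integer, V a ℚ_p-vector space of dimension 2s, and W, W' ⊆ V subspaces with dim W = dim W' = s. Then there exist vectors v₁,…,v_{2s} ∈ V such that for every subset I ⊆ {1,…,2s} with |I| = s, one has span_{ℚ_p}(v_i : i ∈ I) ∩ W = 0 and span_{ℚ_p}(v_i : i ∈ I) ∩ W' = 0. -/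
/-!
As ℚ_p is infinite, `V` is not a finite union of proper subspaces, so one can choose
`v₁, v₂, …` in turn with each `vₖ` outside the subspaces `span (vⱼ : j ∈ J) + W` and
`span (vⱼ : j ∈ J) + W'` for all `J ⊆ {1, …, k - 1}` with `|J| < s`; these are proper because
their dimension is less than `2s`. Then any `s` of the `vᵢ` stay linearly independent modulo `W`
and modulo `W'`, which says that their span meets `W` and `W'` trivially.
-/

open Module Submodule Set

namespace Fin

theorem ncard_preimage_castSucc_le {n : ℕ} (I : Set (Fin (n + 1))) :
    (castSucc ⁻¹' I).ncard ≤ I.ncard := by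
  rw [← ncard_image_of_injective _ (castSucc_injective n)]
  exact ncard_le_ncard (image_preimage_subset _ _)

theorem ncard_preimage_castSucc_lt {n : ℕ} {I : Set (Fin (n + 1))} (h : last n ∈ I) :
    (castSucc ⁻¹' I).ncard < I.ncard := by
  rw [← ncard_image_of_injective _ (castSucc_injective n)]
  refine ncard_lt_ncard ((ssubset_iff_of_subset (image_preimage_subset _ _)).2 ⟨_, h, ?_⟩)
  rintro ⟨i, -, hi⟩
  exact castSucc_ne_last i hi

end Fin

section

variable {K V M : Type*} [Field K] [AddCommGroup V] [Module K V] [AddCommGroup M] [Module K M]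

theorem linearIndepOn_snoc {n : ℕ} {w : Fin n → M} {y : M} {I : Set (Fin (n + 1))}
    (hw : LinearIndepOn K w (Fin.castSucc ⁻¹' I))
    (hy : Fin.last n ∈ I → y ∉ span K (w '' (Fin.castSucc ⁻¹' I))) :
    LinearIndepOn K (Fin.snoc w y : Fin (n + 1) → M) I := by
  set J := Fin.castSucc ⁻¹' I
  have hJ : LinearIndepOn K (Fin.snoc w y : Fin (n + 1) → M) (Fin.castSucc '' J) :=
    .image_of_comp Fin.castSucc _ (by rwa [Fin.snoc_comp_castSucc])
  have hI : I ⊆ insert (Fin.last n) (Fin.castSucc '' J) := by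
    intro i hi
    rcases i.eq_castSucc_or_eq_last with ⟨k, rfl⟩ | rfl
    · exact Or.inr ⟨k, hi, rfl⟩
    · exact Or.inl rfl
  have hlast_notMem : Fin.last n ∉ Fin.castSucc '' J := by
    rintro ⟨i, -, hi⟩
    exact Fin.castSucc_ne_last i hi
  by_cases hlast : Fin.last n ∈ I
  · refine LinearIndepOn.mono ?_ hI
    rw [linearIndepOn_insert hlast_notMem, image_image]
    simpa [Fin.snoc_castSucc, Fin.snoc_last] using And.intro hJ (hy hlast)
  · exact hJ.mono fun i hi => (hI hi).resolve_left fun h => hlast (h ▸ hi)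

theorem span_image_ne_top_of_ncard_lt {ι : Type*} [Finite ι] (w : ι → M) {J : Set ι}
    (h : J.ncard < finrank K M) : span K (w '' J) ≠ ⊤ := by
  intro htop
  have := Fintype.ofFinite (w '' J)
  have hle := finrank_span_le_card (R := K) (w '' J)
  rw [htop, finrank_top, ← ncard_eq_toFinset_card'] at hle
  exact (hle.trans (ncard_image_le (toFinite J))).not_gt h

theorem LinearIndepOn.disjoint_span_image_ker {ι : Type*} {v : ι → V} {I : Set ι}
    {f : V →ₗ[K] M} (h : LinearIndepOn K (f ∘ v) I) :
    Disjoint (span K (v '' I)) (LinearMap.ker f) := by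
  simpa [image_eq_range] using range_ker_disjoint (v := fun i : I => v i) h

theorem exists_fin_linearIndepOn_comp [Infinite K] {ι : Type*} [Finite ι] {E : ι → Type*}
    [∀ j, AddCommGroup (E j)] [∀ j, Module K (E j)] (f : ∀ j, V →ₗ[K] E j)
    (hf : ∀ j, Function.Surjective (f j)) {s : ℕ} (hs : ∀ j, s ≤ finrank K (E j)) (n : ℕ) :
    ∃ v : Fin n → V, ∀ j (I : Set (Fin n)), I.ncard ≤ s → LinearIndepOn K (f j ∘ v) I := by
  induction n with
  | zero => exact ⟨Fin.elim0, fun j I _ => by simp [eq_empty_of_isEmpty I]⟩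
  | succ n ih =>
    obtain ⟨v, hv⟩ := ih
    obtain ⟨x, hx⟩ := exists_forall_notMem_of_forall_ne_top
      (fun Jj : {J : Set (Fin n) // J.ncard < s} × ι =>
        comap (f Jj.2) (span K (f Jj.2 ∘ v '' Jj.1))) fun ⟨⟨J, hJ⟩, j⟩ htop => by
          refine span_image_ne_top_of_ncard_lt (f j ∘ v) (hJ.trans_le (hs j)) ?_
          rw [← map_comap_eq_of_surjective (hf j) (span K _), htop, Submodule.map_top,
            LinearMap.range_eq_top.2 (hf j)]
    refine ⟨Fin.snoc v x, fun j I hI => ?_⟩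
    rw [Fin.comp_snoc]
    exact linearIndepOn_snoc (hv j _ ((Fin.ncard_preimage_castSucc_le I).trans hI))
      fun hlast => hx (⟨_, (Fin.ncard_preimage_castSucc_lt hlast).trans_le hI⟩, j)

end

theorem stmt_7_general (p : ℕ) [Fact p.Prime] (s : ℕ)
    (V : Type*) [AddCommGroup V] [Module ℚ_[p] V] [FiniteDimensional ℚ_[p] V]
    (hV : Module.finrank ℚ_[p] V = 2 * s)
    (W W' : Submodule ℚ_[p] V)
    (hW : Module.finrank ℚ_[p] W = s) (hW' : Module.finrank ℚ_[p] W' = s) :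
    ∃ v : Fin (2 * s) → V,
      ∀ I : Finset (Fin (2 * s)), I.card = s →
        Submodule.span ℚ_[p] (v '' (I : Set (Fin (2 * s)))) ⊓ W = ⊥ ∧
        Submodule.span ℚ_[p] (v '' (I : Set (Fin (2 * s)))) ⊓ W' = ⊥ := by
  have hquot : ∀ b : Bool, s ≤ finrank ℚ_[p] (V ⧸ cond b W W') := by
    intro b
    have := (cond b W W').finrank_quotient_add_finrank
    cases b <;> simp only [cond_true, cond_false] at this ⊢ <;> omega
  obtain ⟨v, hv⟩ := exists_fin_linearIndepOn_comp (fun b => (cond b W W').mkQ)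
    (fun b => (cond b W W').mkQ_surjective) hquot (2 * s)
  have hdisj (I : Finset (Fin (2 * s))) (hI : I.card = s) (b : Bool) :
      span ℚ_[p] (v '' I) ⊓ cond b W W' = ⊥ := by
    simpa [disjoint_iff] using (hv b I (by simp [hI])).disjoint_span_image_ker
  exact ⟨v, fun I hI => ⟨hdisj I hI true, hdisj I hI false⟩⟩

/-- Proposition B.1 (strongly admissible basis, vector-space content): given two `s`-dimensional
subspaces `W, W'` of a `2s`-dimensional ℚ_p-vector space `V`, there are vectors `v₁, …, v_{2s}`
such that the span of any `s` of them meets both `W` and `W'` trivially. -/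
theorem stmt_7 (p : ℕ) [Fact p.Prime] (s : ℕ) (hs : 1 ≤ s)
    (V : Type*) [AddCommGroup V] [Module ℚ_[p] V] [FiniteDimensional ℚ_[p] V]
    (hV : Module.finrank ℚ_[p] V = 2 * s)
    (W W' : Submodule ℚ_[p] V)
    (hW : Module.finrank ℚ_[p] W = s) (hW' : Module.finrank ℚ_[p] W' = s) :
    ∃ v : Fin (2 * s) → V,
      ∀ I : Finset (Fin (2 * s)), I.card = s →
        Submodule.span ℚ_[p] (v '' (I : Set (Fin (2 * s)))) ⊓ W = ⊥ ∧
        Submodule.span ℚ_[p] (v '' (I : Set (Fin (2 * s)))) ⊓ W' = ⊥ :=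
  stmt_7_general p s V hV W W' hW hW'
end

section
/- Let p be a prime, let 0 ≤ d₀ ≤ d be integers with d ≥ 1, and let C ∈ GL_d(ℤ_p). Over ℚ_p, set C_φ = C · diag(I_{d₀}, p^{−1}·I_{d−d₀}) ∈ GL_d(ℚ_p). For j ≥ 1 define the matrix C_j = diag(I_{d₀}, Φ_{p^j}(1+X)·I_{d−d₀}) · C^{−1} over the polynomial ring ℚ_p[X], where Φ_{p^j}(1+X) = Σ_{i=0}^{p−1} (1+X)^{i·p^{j−1}}, and for n ≥ 1 set M_n = C_φ^{n+1} · C_n · C_{n−1} ⋯ C_1 ∈ M_{d×d}(ℚ_p[X]). Then for all integers m > n ≥ 1, every entry of M_m − M_n is divisible by ω_n(X) := (1+X)^{p^n} − 1 in ℚ_p[X]. -/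
/-!
Modulo `ω_n = (1+X)^{p^n} - 1` we have `(1+X)^{p^n} ≡ 1`, hence `Φ_{p^j}(1+X) ≡ p` for every
`j > n`, and so `C_φ · C_j ≡ C · diag(I, p⁻¹ p · I) · C⁻¹ = 1`. Since
`M_{k+1} = C_φ^{k+1} · (C_φ · C_{k+1}) · C_k ⋯ C_1`, this gives `M_{k+1} ≡ M_k` for all `k ≥ n`.
-/

noncomputable section

/-- `Φ_{p^j}(1+X) = Σ_{i=0}^{p-1} (1+X)^{i·p^{j-1}}` as a polynomial over `ℚ_p`. -/
def Phi (p : ℕ) [Fact p.Prime] (j : ℕ) : Polynomial ℚ_[p] :=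
  ∑ i ∈ Finset.range p, (1 + Polynomial.X) ^ (i * p ^ (j - 1))

/-- The block-diagonal matrix `diag(I_{d₀}, α·I_{d-d₀})`. -/
def blockDiag (p : ℕ) [Fact p.Prime] (d d₀ : ℕ) (α : Polynomial ℚ_[p]) :
    Matrix (Fin d) (Fin d) (Polynomial ℚ_[p]) :=
  Matrix.diagonal fun i => if (i : ℕ) < d₀ then 1 else α

/-- A matrix over `ℤ_p` regarded as a matrix of constant polynomials over `ℚ_p`. -/
def mapC (p : ℕ) [Fact p.Prime] (d : ℕ) (C : Matrix (Fin d) (Fin d) ℤ_[p]) :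
    Matrix (Fin d) (Fin d) (Polynomial ℚ_[p]) :=
  C.map fun a => Polynomial.C (a : ℚ_[p])

/-- `C_φ = C · diag(I_{d₀}, p⁻¹·I_{d-d₀})`. -/
def Cphi (p : ℕ) [Fact p.Prime] (d d₀ : ℕ) (C : Matrix (Fin d) (Fin d) ℤ_[p]) :
    Matrix (Fin d) (Fin d) (Polynomial ℚ_[p]) :=
  mapC p d C * blockDiag p d d₀ (Polynomial.C ((p : ℚ_[p])⁻¹))

/-- `C_j = diag(I_{d₀}, Φ_{p^j}(1+X)·I_{d-d₀}) · C⁻¹`. -/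
def Cmat (p : ℕ) [Fact p.Prime] (d d₀ : ℕ) (C : Matrix (Fin d) (Fin d) ℤ_[p]) (j : ℕ) :
    Matrix (Fin d) (Fin d) (Polynomial ℚ_[p]) :=
  blockDiag p d d₀ (Phi p j) * mapC p d C⁻¹

/-- `M_n = C_φ^{n+1} · C_n · C_{n-1} ⋯ C_1`. -/
def Mmat (p : ℕ) [Fact p.Prime] (d d₀ : ℕ) (C : Matrix (Fin d) (Fin d) ℤ_[p]) (n : ℕ) :
    Matrix (Fin d) (Fin d) (Polynomial ℚ_[p]) :=
  Cphi p d d₀ C ^ (n + 1) * ((List.range n).map fun j => Cmat p d d₀ C (n - j)).prod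

open Polynomial

lemma List.prod_map_range_succ_sub {M : Type*} [Monoid M] (f : ℕ → M) (k : ℕ) :
    ((List.range (k + 1)).map fun j => f (k + 1 - j)).prod
      = f (k + 1) * ((List.range k).map fun j => f (k - j)).prod := by
  rw [List.range_succ_eq_map, List.map_cons, List.prod_cons, List.map_map]
  simp only [Function.comp_def, Nat.sub_zero, Nat.succ_sub_succ]

section

variable {p : ℕ} [Fact p.Prime] {d d₀ : ℕ} (C : Matrix (Fin d) (Fin d) ℤ_[p])

lemma mapC_mul (A B : Matrix (Fin d) (Fin d) ℤ_[p]) :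
    mapC p d (A * B) = mapC p d A * mapC p d B :=
  Matrix.map_mul (f := Polynomial.C.comp (PadicInt.Coe.ringHom (p := p)))

lemma mapC_one : mapC p d (1 : Matrix (Fin d) (Fin d) ℤ_[p]) = 1 :=
  Matrix.map_one _ (map_zero _) (map_one _)

lemma mapC_mul_mapC_inv (hC : IsUnit C.det) : mapC p d C * mapC p d C⁻¹ = 1 := by
  rw [← mapC_mul, Matrix.mul_nonsing_inv C hC, mapC_one]

lemma blockDiag_mul_blockDiag (α β : ℚ_[p][X]) :
    blockDiag p d d₀ α * blockDiag p d d₀ β = blockDiag p d d₀ (α * β) := by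
  simp only [blockDiag, Matrix.diagonal_mul_diagonal]
  congr 1
  ext1 i
  split_ifs <;> simp

lemma blockDiag_one : blockDiag p d d₀ 1 = 1 := by
  simp [blockDiag]

lemma mapMatrix_blockDiag_congr {S : Type*} [Semiring S] (f : ℚ_[p][X] →+* S)
    {α β : ℚ_[p][X]} (h : f α = f β) :
    f.mapMatrix (blockDiag p d d₀ α) = f.mapMatrix (blockDiag p d d₀ β) := by
  simp only [RingHom.mapMatrix_apply, blockDiag, Matrix.diagonal_map (map_zero f), apply_ite f,
    h]

lemma Cphi_mul_Cmat (j : ℕ) :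
    Cphi p d d₀ C * Cmat p d d₀ C j
      = mapC p d C * blockDiag p d d₀ (Polynomial.C (p : ℚ_[p])⁻¹ * Phi p j) * mapC p d C⁻¹ := by
  rw [Cphi, Cmat, mul_assoc, ← mul_assoc (blockDiag _ _ _ _), blockDiag_mul_blockDiag, mul_assoc]

lemma Mmat_succ (k : ℕ) :
    Mmat p d d₀ C (k + 1) = Cphi p d d₀ C ^ (k + 1) * (Cphi p d d₀ C * Cmat p d d₀ C (k + 1))
      * ((List.range k).map fun j => Cmat p d d₀ C (k - j)).prod := by
  rw [Mmat, List.prod_map_range_succ_sub, pow_succ]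
  simp only [mul_assoc]

end

section Congruence

variable {p : ℕ} [Fact p.Prime] (n : ℕ) {d d₀ : ℕ} (C : Matrix (Fin d) (Fin d) ℤ_[p])

local notation "π" => Ideal.Quotient.mk (Ideal.span {(1 + X : ℚ_[p][X]) ^ (p ^ n) - 1})

lemma mk_one_add_X_pow_of_dvd {k : ℕ} (hk : p ^ n ∣ k) : π ((1 + X) ^ k) = 1 := by
  obtain ⟨t, rfl⟩ := hk
  have : π ((1 + X) ^ p ^ n) = 1 := by
    rw [← sub_eq_zero, ← map_one π, ← map_sub, Ideal.Quotient.eq_zero_iff_mem]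
    exact Ideal.mem_span_singleton_self _
  rw [pow_mul, map_pow, this, one_pow]

lemma mk_Phi {j : ℕ} (hj : n < j) : π (Phi p j) = p := by
  have hdvd : ∀ i, p ^ n ∣ i * p ^ (j - 1) := fun i =>
    dvd_mul_of_dvd_right (pow_dvd_pow p (by omega)) i
  simp [Phi, map_sum, mk_one_add_X_pow_of_dvd n (hdvd _)]

lemma mapMatrix_Cphi_mul_Cmat (hC : IsUnit C.det) {j : ℕ} (hj : n < j) :
    (π).mapMatrix (Cphi p d d₀ C * Cmat p d d₀ C j) = 1 := by
  have hscalar : π (Polynomial.C (p : ℚ_[p])⁻¹ * Phi p j) = π 1 := by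
    rw [map_mul, mk_Phi n hj, ← map_natCast π p, ← map_mul, ← Polynomial.C_eq_natCast,
      ← Polynomial.C_mul, inv_mul_cancel₀ (Nat.cast_ne_zero.mpr (Fact.out : p.Prime).ne_zero),
      Polynomial.C_1]
  rw [Cphi_mul_Cmat, map_mul, map_mul, mapMatrix_blockDiag_congr π hscalar, blockDiag_one,
    map_one, mul_one, ← map_mul, mapC_mul_mapC_inv C hC, map_one]

lemma mapMatrix_Mmat_eq (hC : IsUnit C.det) {k : ℕ} (hk : n ≤ k) :
    (π).mapMatrix (Mmat p d d₀ C k) = (π).mapMatrix (Mmat p d d₀ C n) := by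
  induction k, hk using Nat.le_induction with
  | base => rfl
  | succ k hk ih =>
    rw [Mmat_succ, map_mul, map_mul, mapMatrix_Cphi_mul_Cmat n C hC (by omega), mul_one,
      ← map_mul]
    exact ih

end Congruence

lemma Matrix.dvd_sub_apply_of_map_mk_eq {R m n : Type*} [CommRing R] {a : R}
    {A B : Matrix m n R} (h : A.map (Ideal.Quotient.mk (Ideal.span {a}))
      = B.map (Ideal.Quotient.mk (Ideal.span {a}))) (i : m) (j : n) :
    a ∣ (A - B) i j := by
  rw [Matrix.sub_apply, ← Ideal.mem_span_singleton, ← Ideal.Quotient.eq]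
  exact congrFun (congrFun h i) j

theorem stmt_12_general (p : ℕ) [Fact p.Prime] (d d₀ : ℕ)
    (C : Matrix (Fin d) (Fin d) ℤ_[p]) (hC : IsUnit C.det)
    (m n : ℕ) (hmn : n < m) (i j : Fin d) :
    ((1 + Polynomial.X : Polynomial ℚ_[p]) ^ (p ^ n) - 1) ∣
      (Mmat p d d₀ C m - Mmat p d d₀ C n) i j :=
  Matrix.dvd_sub_apply_of_map_mk_eq (mapMatrix_Mmat_eq n C hC hmn.le) i j

/-- Proof of Proposition 2.2 (finite-level congruence): for `m > n ≥ 1`, every entry of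
`M_m - M_n` is divisible by `ω_n(X) = (1+X)^{p^n} - 1` in `ℚ_p[X]`. -/
theorem stmt_12 (p : ℕ) [Fact p.Prime] (d d₀ : ℕ) (hd : 1 ≤ d) (hd₀ : d₀ ≤ d)
    (C : Matrix (Fin d) (Fin d) ℤ_[p]) (hC : IsUnit C.det)
    (m n : ℕ) (hn : 1 ≤ n) (hmn : n < m) (i j : Fin d) :
    ((1 + Polynomial.X : Polynomial ℚ_[p]) ^ (p ^ n) - 1) ∣
      (Mmat p d d₀ C m - Mmat p d d₀ C n) i j :=
  stmt_12_general p d d₀ C hC m n hmn i j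

end
end

section
/- Let Λ be an integral domain, H a Λ-module, and K₁,…,K_g submodules of H (g ≥ 1) with ⋂_{i=1}^g K_i = 0. Let W ⊆ H be a torsion-free Λ-submodule generated by at most s elements, where 1 ≤ s ≤ g. Then there exists a subset I ⊆ {1,…,g} with |I| = s such that W ∩ ⋂_{i∈I} K_i = 0. -/
/-!
Replace each `K i` by its saturation `L i = {x | a • x ∈ K i for some nonzerodivisor a}`.
As there are finitely many, `⨅ i, L i` is the saturation of `⊥`, the torsion of `H`, which meets
the torsion-free `W` trivially. Then choose indices greedily, starting from `V = W` of rank `≤ s`: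
if `V ≠ 0`, some `L j` misses a vector `v ∈ V`, and `V ⊓ L j` has rank `≤ rank V - 1`, as
`v` can be adjoined to any independent family in `V ⊓ L j` (a relation `c • v ∈ L j` forces
`c = 0`). After `s` steps the rank is `0`, and a torsion-free module of rank `0` is zero.
-/

namespace Submodule

variable {Λ H : Type*} [CommRing Λ] [AddCommGroup H] [Module Λ H]

def saturation (K : Submodule Λ H) : Submodule Λ H :=
  (torsion Λ (H ⧸ K)).comap K.mkQ

theorem mem_saturation_iff {K : Submodule Λ H} {x : H} :
    x ∈ K.saturation ↔ ∃ a : nonZeroDivisors Λ, a • x ∈ K := by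
  simp only [saturation, mem_comap, mkQ_apply, mem_torsion_iff, ← Quotient.mk_smul,
    Quotient.mk_eq_zero]

theorem le_saturation (K : Submodule Λ H) : K ≤ K.saturation :=
  fun x hx => mem_saturation_iff.mpr ⟨1, by simpa using hx⟩

theorem smul_mem_saturation_iff {K : Submodule Λ H} (a : nonZeroDivisors Λ) {x : H} :
    a • x ∈ K.saturation ↔ x ∈ K.saturation := by
  refine ⟨fun h => ?_, fun h => K.saturation.smul_of_tower_mem a h⟩
  obtain ⟨b, hb⟩ := mem_saturation_iff.mp h
  exact mem_saturation_iff.mpr ⟨b * a, by rwa [mul_smul]⟩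

theorem saturation_iInf {ι : Type*} [Finite ι] (K : ι → Submodule Λ H) :
    (⨅ i, K i).saturation = ⨅ i, (K i).saturation := by
  refine le_antisymm (le_iInf fun i x hx => ?_) fun x hx => ?_
  · obtain ⟨a, ha⟩ := mem_saturation_iff.mp hx
    exact mem_saturation_iff.mpr ⟨a, mem_iInf K |>.mp ha i⟩
  · have := Fintype.ofFinite ι
    choose a ha using fun i => mem_saturation_iff.mp (mem_iInf _ |>.mp hx i)
    refine mem_saturation_iff.mpr ⟨∏ i, a i, mem_iInf K |>.mpr fun i => ?_⟩
    obtain ⟨b, hb⟩ := Finset.dvd_prod_of_mem a (Finset.mem_univ i)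
    rw [hb, mul_comm, mul_smul]
    exact (K i).smul_of_tower_mem _ (ha i)

theorem inf_saturation_bot_eq_bot (W : Submodule Λ H) [Module.IsTorsionFree Λ W] :
    W ⊓ (⊥ : Submodule Λ H).saturation = ⊥ := by
  refine eq_bot_iff.mpr fun x ⟨hxW, hx⟩ => ?_
  obtain ⟨a, ha⟩ := mem_saturation_iff.mp hx
  have : (a : Λ) • (⟨x, hxW⟩ : W) = (a : Λ) • 0 :=
    Subtype.ext (by simpa [Submonoid.smul_def] using ha)
  simpa using (isRegular_iff_mem_nonZeroDivisors.mpr a.2).isSMulRegular this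

variable [IsDomain Λ]

theorem rank_inf_saturation_le {V K : Submodule Λ H} {v : H} (hvV : v ∈ V)
    (hvK : v ∉ K.saturation) {n : ℕ} (hV : Module.rank Λ V ≤ (n + 1 : ℕ)) :
    Module.rank Λ ↥(V ⊓ K.saturation) ≤ n := by
  by_contra! hlt
  have hle : ((n + 1 : ℕ) : Cardinal) ≤ Module.rank Λ ↥(V ⊓ K.saturation) := by
    exact_mod_cast Cardinal.add_one_le_of_lt hlt
  obtain ⟨w, hw⟩ := Module.le_rank_iff.mp hle
  have hu : LinearIndependent Λ (inclusion inf_le_left ∘ w : Fin (n + 1) → V) :=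
    hw.map' _ (ker_inclusion _ _ inf_le_left)
  have hspan : span Λ (Set.range (inclusion inf_le_left ∘ w)) ≤ K.saturation.comap V.subtype :=
    span_le.mpr <| by rintro _ ⟨i, rfl⟩; exact (w i).2.2
  have hcons : LinearIndependent Λ
      (Fin.cons (⟨v, hvV⟩ : V) (inclusion inf_le_left ∘ w) : Fin (n + 1 + 1) → V) := by
    refine LinearIndependent.finCons' _ _ hu fun c y hy hcy => ?_
    by_contra hc
    refine hvK ?_
    have hcy' : c • v = -(y : H) :=
      eq_neg_of_add_eq_zero_left (by simpa using congrArg Subtype.val hcy)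
    rw [← smul_mem_saturation_iff ⟨c, mem_nonZeroDivisors_of_ne_zero hc⟩]
    exact hcy' ▸ neg_mem (hspan hy)
  have := (Module.le_rank_iff.mpr ⟨_, hcons⟩).trans hV
  norm_cast at this
  omega

theorem exists_card_eq_inf_iInf_saturation_eq_bot {ι : Type*}
    (K : ι → Submodule Λ H) (n : ℕ) (V : Submodule Λ H) [Module.IsTorsionFree Λ V]
    (hV : Module.rank Λ V ≤ n) (A : Finset ι) (hA : n ≤ A.card)
    (hVA : V ⊓ ⨅ i ∈ A, (K i).saturation = ⊥) :
    ∃ I ⊆ A, I.card = n ∧ V ⊓ ⨅ i ∈ I, (K i).saturation = ⊥ := by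
  classical
  induction n generalizing V A with
  | zero =>
    have : Subsingleton V := rank_zero_iff.mp (le_zero_iff.mp (by exact_mod_cast hV))
    exact ⟨∅, A.empty_subset, rfl, by simp [subsingleton_iff_eq_bot.mp this]⟩
  | succ n ih =>
    rcases eq_or_ne V ⊥ with rfl | hV0
    · obtain ⟨I, hIA, hI⟩ := A.exists_subset_card_eq hA
      exact ⟨I, hIA, hI, bot_inf_eq _⟩
    obtain ⟨v, hvV, hv0⟩ := exists_mem_ne_zero_of_ne_bot hV0
    obtain ⟨j, hjA, hvj⟩ : ∃ j ∈ A, v ∉ (K j).saturation := by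
      by_contra! h
      refine hv0 <| (mem_bot Λ).mp <| hVA ▸ ⟨hvV, ?_⟩
      simpa only [SetLike.mem_coe, mem_iInf] using h
    have hsplit : ⨅ i ∈ A, (K i).saturation =
        (K j).saturation ⊓ ⨅ i ∈ A.erase j, (K i).saturation := by
      rw [← Finset.iInf_insert j _ fun i => (K i).saturation, Finset.insert_erase hjA]
    have := (inclusion_injective (inf_le_left : V ⊓ (K j).saturation ≤ V)).moduleIsTorsionFree
      _ (map_smul _)
    obtain ⟨I, hIA, hI, hIV⟩ := ih (V ⊓ (K j).saturation) (rank_inf_saturation_le hvV hvj hV)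
      (A.erase j) (by rw [Finset.card_erase_of_mem hjA]; omega)
      (by rw [inf_assoc, ← hsplit, hVA])
    refine ⟨insert j I, Finset.insert_subset hjA (hIA.trans (A.erase_subset j)), ?_, ?_⟩
    · rw [Finset.card_insert_of_notMem fun h => A.notMem_erase j (hIA h), hI]
    · rw [Finset.iInf_insert, ← inf_assoc, hIV]

end Submodule

theorem stmt_15_general (Λ : Type*) [CommRing Λ] [IsDomain Λ]
    (H : Type*) [AddCommGroup H] [Module Λ H]
    (g : ℕ) (K : Fin g → Submodule Λ H)
    (hK : (⨅ i, K i) = ⊥)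
    (W : Submodule Λ H)
    (hWtf : ∀ r : Λ, r ≠ 0 → ∀ w ∈ W, r • w = 0 → w = 0)
    (s : ℕ) (hsg : s ≤ g)
    (f : Fin s → H) (hW : W = Submodule.span Λ (Set.range f)) :
    ∃ I : Finset (Fin g), I.card = s ∧ W ⊓ (⨅ i ∈ I, K i) = ⊥ := by
  have : Module.IsTorsionFree Λ W := .of_smul_eq_zero fun r w hrw => by
    by_contra! h
    exact h.2 (Subtype.ext (hWtf r h.1 w w.2 congr(($hrw : H))))
  have hrank : Module.rank Λ W ≤ s := by
    subst hW
    refine (rank_span_le _).trans ?_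
    simpa using Cardinal.mk_range_le_lift (f := f)
  have hsat : W ⊓ ⨅ i ∈ Finset.univ, (K i).saturation = ⊥ := by
    simpa [← Submodule.saturation_iInf, hK] using W.inf_saturation_bot_eq_bot
  obtain ⟨I, -, hI, hIW⟩ := Submodule.exists_card_eq_inf_iInf_saturation_eq_bot K s W hrank
    Finset.univ (by simpa using hsg) hsat
  refine ⟨I, hI, eq_bot_iff.mpr ?_⟩
  exact hIW ▸ inf_le_inf_left W (iInf₂_mono fun i _ => (K i).le_saturation)

/-- Lemma 3.16 (module-theoretic content): if `K₁, …, K_g` are submodules of `H` with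
`⋂ᵢ Kᵢ = 0` and `W ⊆ H` is a torsion-free submodule generated by at most `s ≤ g` elements,
then there is a subset `I` of size `s` with `W ∩ ⋂_{i∈I} Kᵢ = 0`. -/
theorem stmt_15 (Λ : Type*) [CommRing Λ] [IsDomain Λ]
    (H : Type*) [AddCommGroup H] [Module Λ H]
    (g : ℕ) (hg : 1 ≤ g) (K : Fin g → Submodule Λ H)
    (hK : (⨅ i, K i) = ⊥)
    (W : Submodule Λ H)
    (hWtf : ∀ r : Λ, r ≠ 0 → ∀ w ∈ W, r • w = 0 → w = 0)
    (s : ℕ) (hs1 : 1 ≤ s) (hsg : s ≤ g)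
    (f : Fin s → H) (hW : W = Submodule.span Λ (Set.range f)) :
    ∃ I : Finset (Fin g), I.card = s ∧ W ⊓ (⨅ i ∈ I, K i) = ⊥ :=
  stmt_15_general Λ H g K hK W hWtf s hsg f hW
end
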